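/- arXiv:1901.04012 — 8 statements merged into one kernel-verified Lean document; each statement's English description precedes it below -/
import Mathlib

section
/- For algebraic curvature tensors X, Y on a Riemannian vector space, the Ricci trace of their Hamilton product satisfies ric(X ∗ Y) = −½( op_X(ric(Y)) + op_Y(ric(X)) ), where op_X(α)_{ij} = α^{pq} X_{ipqj}. Consequently, the kernel of the Ricci trace (the Weyl-type tensors) is closed under ∗, and any X with X ∗ X = 0 has ric(X) = 0. -/
noncomputable section

open BigOperators

def Curv {n : ℕ} (T : Fin n → Fin n → Fin n → Fin n → ℝ) : Prop :=
  (∀ i j k l, T j i k l = - T i j k l) ∧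
  (∀ i j k l, T i j l k = - T i j k l) ∧
  (∀ i j k l, T i j k l + T j k i l + T k i j l = 0)

def Bil {n : ℕ} (X Y : Fin n → Fin n → Fin n → Fin n → ℝ) (i j k l : Fin n) : ℝ :=
  (1/2) * ∑ p, ∑ q, (X i p j q * Y k p l q + Y i p j q * X k p l q)

def hmul {n : ℕ} (X Y : Fin n → Fin n → Fin n → Fin n → ℝ) :
    Fin n → Fin n → Fin n → Fin n → ℝ :=
  fun i j k l => Bil X Y i j k l - Bil X Y i j l k + Bil X Y i k j l - Bil X Y i l j k

/-- The Ricci trace ric(X)_{ij} = X_{pij}{}^p. -/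
def ric2 {n : ℕ} (X : Fin n → Fin n → Fin n → Fin n → ℝ) (i j : Fin n) : ℝ :=
  ∑ p, X p i j p

/-- op_X(α)_{ij} = α^{pq} X_{ipqj}. -/
def opc {n : ℕ} (X : Fin n → Fin n → Fin n → Fin n → ℝ)
    (α : Fin n → Fin n → ℝ) (i j : Fin n) : ℝ :=
  ∑ p, ∑ q, α p q * X i p q j

/-- Pair symmetry of algebraic curvature tensors. -/
lemma curv_pair {n : ℕ} {T : Fin n → Fin n → Fin n → Fin n → ℝ} (hT : Curv T)
    (i j k l : Fin n) : T i j k l = T k l i j := by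
  obtain ⟨h1, h2, h3⟩ := hT
  have b1 := h3 i j k l
  have b2 := h3 j k l i
  have b3 := h3 k l i j
  have b4 := h3 l i j k
  have e1 := h2 j k i l
  have e2 := h2 k l i j
  have e3 := h1 j l k i
  have e4 := h2 j l i k
  have e5 := h2 l i j k
  have e6 := h1 i l j k
  have e7 := h2 i k j l
  have e8 := h1 k i j l
  have e9 := h2 i j k l
  have e10 := h2 j l k i
  have e11 := h1 l j k i
  linarith

lemma sum3_congr {n : ℕ} {f g : Fin n → Fin n → Fin n → ℝ}
    (h : ∀ p a b, f p a b = g p a b) :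
    ∑ p, ∑ a, ∑ b, f p a b = ∑ p, ∑ a, ∑ b, g p a b :=
  Finset.sum_congr rfl fun p _ => Finset.sum_congr rfl fun a _ =>
    Finset.sum_congr rfl fun b _ => h p a b

lemma sum3_swap12 {n : ℕ} (f : Fin n → Fin n → Fin n → ℝ) :
    ∑ p, ∑ a, ∑ b, f p a b = ∑ p, ∑ a, ∑ b, f a p b := Finset.sum_comm

lemma sum3_swap23 {n : ℕ} (f : Fin n → Fin n → Fin n → ℝ) :
    ∑ p, ∑ a, ∑ b, f p a b = ∑ p, ∑ a, ∑ b, f p b a :=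
  Finset.sum_congr rfl fun _ _ => Finset.sum_comm

lemma sum3_rot {n : ℕ} (f : Fin n → Fin n → Fin n → ℝ) :
    ∑ p, ∑ a, ∑ b, f p a b = ∑ p, ∑ a, ∑ b, f b p a := by
  rw [sum3_swap12]
  exact sum3_swap23 (fun p a b => f a p b)

lemma sum3_to_last {n : ℕ} (f : Fin n → Fin n → Fin n → ℝ) :
    ∑ p, ∑ a, ∑ b, f p a b = ∑ a, ∑ b, ∑ p, f p a b := by
  rw [Finset.sum_comm]
  exact Finset.sum_congr rfl fun a _ => Finset.sum_comm

lemma sum3_add2 {n : ℕ} (f g : Fin n → Fin n → Fin n → ℝ) :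
    ∑ p, ∑ a, ∑ b, (f p a b + g p a b)
      = (∑ p, ∑ a, ∑ b, f p a b) + ∑ p, ∑ a, ∑ b, g p a b := by
  simp [Finset.sum_add_distrib]

lemma sum3_add3 {n : ℕ} (f g h : Fin n → Fin n → Fin n → ℝ) :
    ∑ p, ∑ a, ∑ b, (f p a b + g p a b + h p a b)
      = (∑ p, ∑ a, ∑ b, f p a b) + (∑ p, ∑ a, ∑ b, g p a b)
        + ∑ p, ∑ a, ∑ b, h p a b := by
  simp [Finset.sum_add_distrib]

section helpers
variable {n : ℕ} {A B : Fin n → Fin n → Fin n → Fin n → ℝ}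

/-- `Q = N`. -/
lemma helper1 (hA : Curv A) (hB : Curv B) (i j : Fin n) :
    ∑ p, ∑ a, ∑ b, A p a i b * B p a j b
      = ∑ p, ∑ a, ∑ b, A i p a b * B j p a b := by
  have h1 : ∑ p, ∑ a, ∑ b, A p a i b * B p a j b
      = ∑ p, ∑ a, ∑ b, A i b p a * B j b p a :=
    sum3_congr fun p a b => by
      rw [curv_pair hA p a i b, curv_pair hB p a j b]
  rw [h1]
  exact (sum3_rot (fun p a b => A i p a b * B j p a b)).symm

/-- `2R = N` (first Bianchi identity contracted once). -/
lemma helper2 (hA : Curv A) (hB : Curv B) (i j : Fin n) :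
    2 * (∑ p, ∑ a, ∑ b, A p a i b * B p j a b)
      = ∑ p, ∑ a, ∑ b, A i p a b * B j p a b := by
  have hZ : ∑ p, ∑ a, ∑ b,
      ((A p a i b * B p j a b) + (A a i p b * B p j a b) + (A i p a b * B p j a b)) = 0 := by
    refine Finset.sum_eq_zero fun p _ => Finset.sum_eq_zero fun a _ =>
      Finset.sum_eq_zero fun b _ => ?_
    have h := hA.2.2 p a i b
    linear_combination B p j a b * h
  rw [sum3_add3] at hZ
  have hU : ∑ p, ∑ a, ∑ b, A a i p b * B p j a b
      = ∑ p, ∑ a, ∑ b, A p a i b * B p j a b := by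
    have h1 : ∑ p, ∑ a, ∑ b, A a i p b * B p j a b
        = ∑ p, ∑ a, ∑ b, (-(A p b i a)) * B p j a b :=
      sum3_congr fun p a b => by
        rw [show A a i p b = -(A p b i a) by
          have e1 := hA.1 a i p b
          have e2 := curv_pair hA i a p b
          linarith]
    rw [h1, sum3_swap23 (fun p a b => (-(A p b i a)) * B p j a b)]
    exact sum3_congr fun p a b => by rw [hB.2.1 p j a b]; ring
  have hV : ∑ p, ∑ a, ∑ b, A i p a b * B p j a b
      = - ∑ p, ∑ a, ∑ b, A i p a b * B j p a b := by
    have : ∑ p, ∑ a, ∑ b, A i p a b * B p j a b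
        = ∑ p, ∑ a, ∑ b, (-(A i p a b * B j p a b)) :=
      sum3_congr fun p a b => by rw [hB.1 p j a b]; ring
    simpa using this
  linarith

/-- `S = Q − R` (first Bianchi identity on the second factor). -/
lemma helper3 (hA : Curv A) (hB : Curv B) (i j : Fin n) :
    ∑ p, ∑ a, ∑ b, A p a i b * B j a p b
      = (∑ p, ∑ a, ∑ b, A p a i b * B p a j b)
        - ∑ p, ∑ a, ∑ b, A p a i b * B p j a b := by
  have hZ : ∑ p, ∑ a, ∑ b,
      ((A p a i b * B j a p b) + (A p a i b * B a p j b) + (A p a i b * B p j a b)) = 0 := by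
    refine Finset.sum_eq_zero fun p _ => Finset.sum_eq_zero fun a _ =>
      Finset.sum_eq_zero fun b _ => ?_
    have h := hB.2.2 j a p b
    linear_combination A p a i b * h
  rw [sum3_add3] at hZ
  have hW : ∑ p, ∑ a, ∑ b, A p a i b * B a p j b
      = - ∑ p, ∑ a, ∑ b, A p a i b * B p a j b := by
    rw [sum3_swap12 (fun p a b => A p a i b * B a p j b)]
    have : ∑ p, ∑ a, ∑ b, A a p i b * B p a j b
        = ∑ p, ∑ a, ∑ b, (-(A p a i b * B p a j b)) :=
      sum3_congr fun p a b => by rw [hA.1 a p i b]; ring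
    simpa using this
  linarith

/-- hence `S = Q/2`. -/
lemma helperS (hA : Curv A) (hB : Curv B) (i j : Fin n) :
    2 * (∑ p, ∑ a, ∑ b, A p a i b * B j a p b)
      = ∑ p, ∑ a, ∑ b, A p a i b * B p a j b := by
  have h1 := helper1 hA hB i j
  have h2 := helper2 hA hB i j
  have h3 := helper3 hA hB i j
  linarith

/-- the `T3` summand equals the swapped `T1` summand. -/
lemma helperT3 (hA : Curv A) (hB : Curv B) (i j : Fin n) :
    ∑ p, ∑ a, ∑ b, A p a j b * B i a p b
      = ∑ p, ∑ a, ∑ b, B p a i b * A j a p b := by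
  have h1 : ∑ p, ∑ a, ∑ b, B p a i b * A j a p b
      = ∑ p, ∑ a, ∑ b, B i b p a * A p b j a :=
    sum3_congr fun p a b => by
      rw [curv_pair hB p a i b, curv_pair hA j a p b]
  rw [h1, sum3_swap23 (fun p a b => B i b p a * A p b j a)]
  exact sum3_congr fun p a b => by ring

end helpers

/-- The key trace identity. -/
lemma key {n : ℕ} (X Y : Fin n → Fin n → Fin n → Fin n → ℝ)
    (hX : Curv X) (hY : Curv Y) (i j : Fin n) :
    ric2 (hmul X Y) i j
      = -(1/2) * (opc X (ric2 Y) i j + opc Y (ric2 X) i j) := by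
  have hSQ : 2 * (∑ p, ∑ a, ∑ b, X p a i b * Y j a p b)
      = ∑ p, ∑ a, ∑ b, X p a i b * Y p a j b := helperS hX hY i j
  have hSQ' : 2 * (∑ p, ∑ a, ∑ b, Y p a i b * X j a p b)
      = ∑ p, ∑ a, ∑ b, Y p a i b * X p a j b := helperS hY hX i j
  have hT1 : ∑ p, Bil X Y p i j p
      = (1/2) * ((∑ p, ∑ a, ∑ b, X p a i b * Y j a p b)
          + ∑ p, ∑ a, ∑ b, Y p a i b * X j a p b) := by
    unfold Bil
    rw [← Finset.mul_sum, ← sum3_add2]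
  have hT2 : ∑ p, Bil X Y p i p j
      = (1/2) * ((∑ p, ∑ a, ∑ b, X p a i b * Y p a j b)
          + ∑ p, ∑ a, ∑ b, Y p a i b * X p a j b) := by
    unfold Bil
    rw [← Finset.mul_sum, ← sum3_add2]
  have hT3 : ∑ p, Bil X Y p j i p
      = (1/2) * ((∑ p, ∑ a, ∑ b, Y p a i b * X j a p b)
          + ∑ p, ∑ a, ∑ b, X p a i b * Y j a p b) := by
    have e1 : ∑ p, ∑ a, ∑ b, X p a j b * Y i a p b
        = ∑ p, ∑ a, ∑ b, Y p a i b * X j a p b := helperT3 hX hY i j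
    have e2 : ∑ p, ∑ a, ∑ b, Y p a j b * X i a p b
        = ∑ p, ∑ a, ∑ b, X p a i b * Y j a p b := helperT3 hY hX i j
    rw [← e1, ← e2]
    unfold Bil
    rw [← Finset.mul_sum, ← sum3_add2]
  have tr : ∀ (A B : Fin n → Fin n → Fin n → Fin n → ℝ), Curv A → Curv B →
      ∑ p, ∑ a, ∑ b, A p a p b * B i a j b = opc B (ric2 A) i j := by
    intro A B hA hB
    rw [sum3_to_last (fun p a b => A p a p b * B i a j b)]
    unfold opc
    refine Finset.sum_congr rfl fun a _ => Finset.sum_congr rfl fun b _ => ?_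
    rw [← Finset.sum_mul]
    have e1 : ∑ p, A p a p b = -(ric2 A a b) := by
      unfold ric2
      have h : ∀ p : Fin n, A p a p b = -(A p a b p) := fun p => by
        have := hA.2.1 p a b p; linarith
      simp [h]
    rw [e1]
    have e2 : B i a j b = -(B i a b j) := by
      have := hB.2.1 i a b j; linarith
    rw [e2]; ring
  have hT0 : ∑ p, Bil X Y p p i j
      = (1/2) * (opc Y (ric2 X) i j + opc X (ric2 Y) i j) := by
    unfold Bil
    rw [← Finset.mul_sum, ← tr X Y hX hY, ← tr Y X hY hX, ← sum3_add2]
  have main : ric2 (hmul X Y) i j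
      = (∑ p, Bil X Y p i j p) - (∑ p, Bil X Y p i p j)
        + (∑ p, Bil X Y p j i p) - ∑ p, Bil X Y p p i j := by
    unfold ric2 hmul
    rw [Finset.sum_sub_distrib, Finset.sum_add_distrib, Finset.sum_sub_distrib]
  rw [main, hT1, hT2, hT3, hT0]
  linarith

/-- ric(X ∗ Y) = −½( op_X(ric Y) + op_Y(ric X) ).  Consequently the kernel of the
Ricci trace (Weyl-type tensors) is closed under the Hamilton product, and any X
with X ∗ X = 0 is Ricci-flat. -/
theorem ric_of_hamilton_product {n : ℕ}
    (X Y : Fin n → Fin n → Fin n → Fin n → ℝ)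
    (hX : Curv X) (hY : Curv Y) :
    (∀ i j, ric2 (hmul X Y) i j
        = -(1/2) * (opc X (ric2 Y) i j + opc Y (ric2 X) i j)) ∧
    ((∀ i j, ric2 X i j = 0) → (∀ i j, ric2 Y i j = 0) →
        ∀ i j, ric2 (hmul X Y) i j = 0) ∧
    (hmul X X = 0 → ∀ i j, ric2 X i j = 0) := by
  refine ⟨key X Y hX hY, ?_, ?_⟩
  · intro hrX hrY i j
    rw [key X Y hX hY i j]
    have e1 : opc X (ric2 Y) i j = 0 := by
      unfold opc
      refine Finset.sum_eq_zero fun p _ => Finset.sum_eq_zero fun q _ => ?_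
      rw [hrY p q]; ring
    have e2 : opc Y (ric2 X) i j = 0 := by
      unfold opc
      refine Finset.sum_eq_zero fun p _ => Finset.sum_eq_zero fun q _ => ?_
      rw [hrX p q]; ring
    rw [e1, e2]; ring
  · intro h0 i j
    -- op_X(ric X) vanishes identically
    have hop : ∀ a b : Fin n, opc X (ric2 X) a b = 0 := by
      intro a b
      have hk := key X X hX hX a b
      rw [h0] at hk
      have : ric2 (0 : Fin n → Fin n → Fin n → Fin n → ℝ) a b = 0 := by
        unfold ric2; simp
      rw [this] at hk
      linarith
    -- taking the trace gives the sum of squares of ric X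
    have hsq : ∑ p, ∑ q, (ric2 X p q) ^ 2 = 0 := by
      have htr : ∑ d, opc X (ric2 X) d d = 0 :=
        Finset.sum_eq_zero fun d _ => hop d d
      have hre : ∑ d, opc X (ric2 X) d d = ∑ p, ∑ q, (ric2 X p q) ^ 2 := by
        unfold opc
        rw [sum3_to_last (fun d p q => ric2 X p q * X d p q d)]
        refine Finset.sum_congr rfl fun p _ => Finset.sum_congr rfl fun q _ => ?_
        rw [← Finset.mul_sum]
        have : ∑ d, X d p q d = ric2 X p q := rfl
        rw [this]; ring
      rw [← hre, htr]
    have hall : ∀ p ∈ (Finset.univ : Finset (Fin n)),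
        ∑ q, (ric2 X p q) ^ 2 = 0 := by
      rw [← Finset.sum_eq_zero_iff_of_nonneg]
      · exact hsq
      · intro p _
        exact Finset.sum_nonneg fun q _ => sq_nonneg _
    have := (Finset.sum_eq_zero_iff_of_nonneg
      (fun q _ => sq_nonneg (ric2 X i q))).mp (hall i (Finset.mem_univ i)) j
      (Finset.mem_univ j)
    exact pow_eq_zero_iff (by norm_num) |>.mp this
end
end

section
/- On a Riemannian vector space of dimension n ≥ 4, the algebra of algebraic curvature tensors with the Hamilton product has no annihilating elements: if X ∗ Y = 0 for all algebraic curvature tensors Y, then X = 0. -/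
noncomputable section

open BigOperators

/-- Kronecker delta. -/
def dd {n : ℕ} (x y : Fin n) : ℝ := if x = y then 1 else 0

lemma dd_self {n : ℕ} (x : Fin n) : dd x x = 1 := if_pos rfl

lemma dd_ne {n : ℕ} {x y : Fin n} (h : x ≠ y) : dd x y = 0 := if_neg h

lemma sum_dd {n : ℕ} (f : Fin n → ℝ) (b : Fin n) : ∑ p, dd p b * f p = f b := by
  simp [dd, ite_mul]

lemma sum_eps {n : ℕ} (f : Fin n → ℝ) (a b k : Fin n) :
    ∑ p, (dd k a * dd p b - dd k b * dd p a) * f p = dd k a * f b - dd k b * f a := by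
  have : (fun p => (dd k a * dd p b - dd k b * dd p a) * f p)
      = fun p => dd k a * (dd p b * f p) - dd k b * (dd p a * f p) := by
    funext p; ring
  rw [this, Finset.sum_sub_distrib, ← Finset.mul_sum, ← Finset.mul_sum, sum_dd, sum_dd]

lemma sum2 {n : ℕ} (g : Fin n → Fin n → ℝ) (a b k l : Fin n) :
    ∑ p, ∑ q, ((dd k a * dd p b - dd k b * dd p a) * (dd l a * dd q b - dd l b * dd q a)) * g p q
      = dd k a * (dd l a * g b b - dd l b * g b a) - dd k b * (dd l a * g a b - dd l b * g a a) := by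
  have h1 : ∀ p, ∑ q, ((dd k a * dd p b - dd k b * dd p a) * (dd l a * dd q b - dd l b * dd q a)) * g p q
      = (dd k a * dd p b - dd k b * dd p a) * (dd l a * g p b - dd l b * g p a) := by
    intro p
    calc ∑ q, ((dd k a * dd p b - dd k b * dd p a) * (dd l a * dd q b - dd l b * dd q a)) * g p q
        = ∑ q, (dd k a * dd p b - dd k b * dd p a) * ((dd l a * dd q b - dd l b * dd q a) * g p q) := by
          refine Finset.sum_congr rfl fun q _ => ?_; ring
      _ = (dd k a * dd p b - dd k b * dd p a) * ∑ q, (dd l a * dd q b - dd l b * dd q a) * g p q := by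
          rw [Finset.mul_sum]
      _ = (dd k a * dd p b - dd k b * dd p a) * (dd l a * g p b - dd l b * g p a) := by
          rw [sum_eps]
  rw [Finset.sum_congr rfl fun p _ => h1 p]
  exact sum_eps (fun p => dd l a * g p b - dd l b * g p a) a b k

/-- The plane curvature tensor of the 2-plane spanned by `e_a, e_b`. -/
def Yp {n : ℕ} (a b : Fin n) : Fin n → Fin n → Fin n → Fin n → ℝ :=
  fun i j k l => (dd i a * dd j b - dd i b * dd j a) * (dd k a * dd l b - dd k b * dd l a)

lemma curv_Yp {n : ℕ} (a b : Fin n) : Curv (Yp a b) :=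
  ⟨fun i j k l => by simp only [Yp]; ring,
   fun i j k l => by simp only [Yp]; ring,
   fun i j k l => by simp only [Yp]; ring⟩

lemma Bil_plane {n : ℕ} (X : Fin n → Fin n → Fin n → Fin n → ℝ) (a b i j k l : Fin n) :
    Bil X (Yp a b) i j k l =
      (1/2) * ((dd k a * (dd l a * X i b j b - dd l b * X i b j a)
              - dd k b * (dd l a * X i a j b - dd l b * X i a j a))
             + (dd i a * (dd j a * X k b l b - dd j b * X k b l a)
              - dd i b * (dd j a * X k a l b - dd j b * X k a l a))) := by
  have step : ∀ p, ∑ q, (X i p j q * Yp a b k p l q + Yp a b i p j q * X k p l q)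
      = (∑ q, ((dd k a * dd p b - dd k b * dd p a) * (dd l a * dd q b - dd l b * dd q a)) * X i p j q)
      + ∑ q, ((dd i a * dd p b - dd i b * dd p a) * (dd j a * dd q b - dd j b * dd q a)) * X k p l q := by
    intro p
    rw [← Finset.sum_add_distrib]
    refine Finset.sum_congr rfl fun q _ => ?_
    simp only [Yp]; ring
  show (1/2) * (∑ p, ∑ q, (X i p j q * Yp a b k p l q + Yp a b i p j q * X k p l q)) = _
  rw [Finset.sum_congr rfl fun p _ => step p, Finset.sum_add_distrib,
    sum2 (fun p q => X i p j q) a b k l, sum2 (fun p q => X k p l q) a b i j]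

/-- In dimension n ≥ 4 the algebra of algebraic curvature tensors with the Hamilton
product has no annihilating elements: if X ∗ Y = 0 for every algebraic curvature
tensor Y, then X = 0. -/
theorem hamilton_product_faithful {n : ℕ} (hn : 4 ≤ n)
    (X : Fin n → Fin n → Fin n → Fin n → ℝ) (hX : Curv X)
    (h : ∀ Y : Fin n → Fin n → Fin n → Fin n → ℝ, Curv Y → hmul X Y = 0) :
    X = 0 := by
  obtain ⟨hA1, hA2, _⟩ := hX
  have z1 : ∀ i k l, X i i k l = 0 := fun i k l => by have := hA1 i i k l; linarith
  have z2 : ∀ i j k, X i j k k = 0 := fun i j k => by have := hA2 i j k k; linarith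
  have key : ∀ a b i j k l : Fin n, hmul X (Yp a b) i j k l = 0 := by
    intro a b i j k l
    have := h (Yp a b) (curv_Yp a b)
    simpa using congrFun (congrFun (congrFun (congrFun this i) j) k) l
  have L : ∀ a b c d : Fin n, a ≠ b → c ≠ a → c ≠ b → d ≠ a → d ≠ b → X c b d a = 0 := by
    intro a b c d hab hca hcb hda hdb
    have e := key a b c a d b
    simp only [hmul, Bil_plane, dd_self, dd_ne hab, dd_ne (Ne.symm hab), dd_ne hca,
      dd_ne hcb, dd_ne hda, dd_ne hdb] at e
    linarith
  have L2 : ∀ a b : Fin n, a ≠ b → X a b a b = 0 := by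
    intro a b hab
    have e := key a b a b a b
    simp only [hmul, Bil_plane, dd_self, dd_ne hab, dd_ne (Ne.symm hab)] at e
    have h1 := z1 a b b
    have h2 := z1 b a a
    have h3 := z1 a a a
    have h4 := z1 b b b
    have h5 := hA2 a b a b
    linarith
  funext i j k l
  show X i j k l = 0
  by_cases hij : i = j
  · subst hij; exact z1 _ _ _
  by_cases hkl : k = l
  · subst hkl; exact z2 _ _ _
  by_cases hik : i = k
  · subst hik
    by_cases hjl : j = l
    · subst hjl; exact L2 i j hij
    · exact L l j i i (Ne.symm hjl) hkl hij hkl hij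
  by_cases hil : i = l
  · subst hil
    by_cases hjk : j = k
    · subst hjk
      have e1 := hA2 i j j i
      have e2 := L2 i j hij
      linarith
    · have e1 := hA2 i j k i
      have e2 := L k j i i (Ne.symm hjk) hik hij hik hij
      linarith
  by_cases hjk : j = k
  · subst hjk
    have e1 := hA1 i j j l
    have e2 := L l i j j (Ne.symm hil) hkl (Ne.symm hij) hkl (Ne.symm hij)
    linarith
  by_cases hjl : j = l
  · subst hjl
    have e1 := hA2 i j k j
    have e2 := hA1 i j j k
    have e3 := L k i j j (Ne.symm hik) (Ne.symm hkl) (Ne.symm hij) (Ne.symm hkl) (Ne.symm hij)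
    linarith
  · exact L l j i k (Ne.symm hjl) hil hij hkl (Ne.symm hjk)
end
end

section
/- If β is a symmetric 2-tensor on a Riemannian vector space which is an orthogonal projection (β ∘ β = β as an endomorphism via the metric), then (β ⩓ β) ∗ (β ⩓ β) = (tr β − 1) (β ⩓ β), ((h−β) ⩓ (h−β)) ∗ ((h−β) ⩓ (h−β)) = (n − tr β − 1)((h−β) ⩓ (h−β)), and ((h−β) ⩓ (h−β)) ∗ (β ⩓ β) = 0. In particular, if tr β ∉ {1, n−1}, then (tr β − 1)⁻¹ β ⩓ β and (n − tr β − 1)⁻¹ (h−β) ⩓ (h−β) are orthogonal idempotents for ∗. -/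
noncomputable section

open BigOperators

def kn {n : ℕ} (α β : Fin n → Fin n → ℝ) :
    Fin n → Fin n → Fin n → Fin n → ℝ :=
  fun i j k l =>
    (1/2) * (α k i * β j l - α k j * β i l) - (1/2) * (α l i * β j k - α l j * β i k)

def kdelta {n : ℕ} (i j : Fin n) : ℝ := if i = j then 1 else 0

/-- Composition of the endomorphisms associated to 2-tensors via the metric:
(α ∘ β)_i{}^j = α_p{}^j β_i{}^p. -/
def comp2 {n : ℕ} (α β : Fin n → Fin n → ℝ) (i j : Fin n) : ℝ :=
  ∑ p, α p j * β i p

def IsSym2 {n : ℕ} (α : Fin n → Fin n → ℝ) : Prop := ∀ i j, α j i = α i j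

def tr2 {n : ℕ} (α : Fin n → Fin n → ℝ) : ℝ := ∑ i, α i i

lemma kn_simp {n : ℕ} (α : Fin n → Fin n → ℝ) (hs : IsSym2 α) (a b c d : Fin n) :
    kn α α a b c d = α a c * α b d - α a d * α b c := by
  simp only [kn, hs c a, hs c b, hs d a, hs d b]
  ring

lemma key_self {n : ℕ} (α : Fin n → Fin n → ℝ) (hs : IsSym2 α)
    (hP : ∀ a b, ∑ p, α a p * α b p = α a b) (i j k l : Fin n) :
    ∑ p, ∑ q, (kn α α i p j q * kn α α k p l q)
      = (tr2 α - 2) * (α i j * α k l) + α i k * α j l := by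
  have h1 : ∀ p : Fin n, ∑ q, (kn α α i p j q * kn α α k p l q)
      = (α i j * α k l) * α p p - α i j * (α l p * α k p)
        - α k l * (α j p * α i p) + α i k * (α j p * α l p) := by
    intro p
    have e : ∀ q, kn α α i p j q * kn α α k p l q
        = (α i j * α k l) * (α p q * α p q) - (α i j * α p l) * (α p q * α k q)
          - (α p j * α k l) * (α i q * α p q) + (α p j * α p l) * (α i q * α k q) := by
      intro q; rw [kn_simp α hs, kn_simp α hs]; ring
    simp only [e]
    rw [Finset.sum_add_distrib, Finset.sum_sub_distrib, Finset.sum_sub_distrib,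
        ← Finset.mul_sum, ← Finset.mul_sum, ← Finset.mul_sum, ← Finset.mul_sum,
        hP p p, hP p k, hP i p, hP i k]
    rw [hs p l, hs p j, hs p k, hs p i]
    ring
  simp only [h1]
  rw [Finset.sum_add_distrib, Finset.sum_sub_distrib, Finset.sum_sub_distrib,
      ← Finset.mul_sum, ← Finset.mul_sum, ← Finset.mul_sum, ← Finset.mul_sum,
      hP l k, hP j i, hP j l]
  simp only [tr2, hs k l, hs i j]
  ring

lemma key_cross {n : ℕ} (α β : Fin n → Fin n → ℝ) (hsα : IsSym2 α) (hsβ : IsSym2 β)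
    (h0 : ∀ a b, ∑ p, α a p * β b p = 0) (i j k l : Fin n) :
    ∑ p, ∑ q, (kn α α i p j q * kn β β k p l q) = 0 := by
  have h1 : ∀ p : Fin n, ∑ q, (kn α α i p j q * kn β β k p l q) = 0 := by
    intro p
    have e : ∀ q, kn α α i p j q * kn β β k p l q
        = (α i j * β k l) * (α p q * β p q) - (α i j * β p l) * (α p q * β k q)
          - (α p j * β k l) * (α i q * β p q) + (α p j * β p l) * (α i q * β k q) := by
      intro q; rw [kn_simp α hsα, kn_simp β hsβ]; ring
    simp only [e]
    rw [Finset.sum_add_distrib, Finset.sum_sub_distrib, Finset.sum_sub_distrib,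
        ← Finset.mul_sum, ← Finset.mul_sum, ← Finset.mul_sum, ← Finset.mul_sum,
        h0 p p, h0 p k, h0 i p, h0 i k]
    ring
  simp [h1]

lemma Bil_self {n : ℕ} (α : Fin n → Fin n → ℝ) (i j k l : Fin n) :
    Bil (kn α α) (kn α α) i j k l = ∑ p, ∑ q, (kn α α i p j q * kn α α k p l q) := by
  simp only [Bil]
  have e : ∀ p q : Fin n, (kn α α i p j q * kn α α k p l q + kn α α i p j q * kn α α k p l q)
      = 2 * (kn α α i p j q * kn α α k p l q) := fun p q => by ring
  simp only [e, ← Finset.mul_sum]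
  ring

lemma hmul_kn_self {n : ℕ} (α : Fin n → Fin n → ℝ) (hs : IsSym2 α)
    (hP : ∀ a b, ∑ p, α a p * α b p = α a b) :
    hmul (kn α α) (kn α α) = (tr2 α - 1) • kn α α := by
  funext i j k l
  have hB : ∀ a b c d : Fin n, Bil (kn α α) (kn α α) a b c d
      = (tr2 α - 2) * (α a b * α c d) + α a c * α b d := fun a b c d => by
    rw [Bil_self, key_self α hs hP]
  simp only [hmul, Pi.smul_apply, smul_eq_mul, hB, kn_simp α hs, hs k l]
  ring

lemma hmul_kn_cross {n : ℕ} (α β : Fin n → Fin n → ℝ) (hsα : IsSym2 α) (hsβ : IsSym2 β)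
    (h0 : ∀ a b, ∑ p, α a p * β b p = 0) :
    hmul (kn α α) (kn β β) = 0 := by
  have h0' : ∀ a b, ∑ p, β a p * α b p = 0 := by
    intro a b
    have := h0 b a
    rw [← this]
    exact Finset.sum_congr rfl fun p _ => mul_comm _ _
  have hB : ∀ a b c d : Fin n, Bil (kn α α) (kn β β) a b c d = 0 := by
    intro a b c d
    simp only [Bil, Finset.sum_add_distrib]
    rw [key_cross α β hsα hsβ h0 a b c d, key_cross β α hsβ hsα h0' a b c d]
    ring
  funext i j k l
  simp [hmul, hB]

lemma hmul_comm {n : ℕ} (X Y : Fin n → Fin n → Fin n → Fin n → ℝ) :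
    hmul X Y = hmul Y X := by
  have hB : Bil X Y = Bil Y X := by
    funext i j k l
    simp only [Bil]
    congr 1
    exact Finset.sum_congr rfl fun p _ => Finset.sum_congr rfl fun q _ => add_comm _ _
  unfold hmul
  rw [hB]

lemma hmul_smul {n : ℕ} (a b : ℝ) (X Y : Fin n → Fin n → Fin n → Fin n → ℝ) :
    hmul (a • X) (b • Y) = (a * b) • hmul X Y := by
  have hB : ∀ i j k l : Fin n, Bil (a • X) (b • Y) i j k l = (a * b) * Bil X Y i j k l := by
    intro i j k l
    simp only [Bil, Pi.smul_apply, smul_eq_mul, Finset.mul_sum]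
    exact Finset.sum_congr rfl fun p _ => Finset.sum_congr rfl fun q _ => by ring
  funext i j k l
  simp only [hmul, Pi.smul_apply, smul_eq_mul, hB]
  ring


/-- If β is a symmetric 2-tensor with β ∘ β = β (an orthogonal projection), then
(β⩓β) ∗ (β⩓β) = (tr β − 1)(β⩓β), ((h−β)⩓(h−β)) ∗ ((h−β)⩓(h−β)) = (n − tr β − 1)((h−β)⩓(h−β)),
and ((h−β)⩓(h−β)) ∗ (β⩓β) = 0; hence for tr β ∉ {1, n−1} the suitably scaled tensors
are orthogonal idempotents for the Hamilton product. -/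
theorem projection_kn_idempotents {n : ℕ}
    (β : Fin n → Fin n → ℝ) (hβ : IsSym2 β)
    (hproj : ∀ i j, comp2 β β i j = β i j) :
    (hmul (kn β β) (kn β β) = (tr2 β - 1) • kn β β) ∧
    (hmul (kn (kdelta - β) (kdelta - β)) (kn (kdelta - β) (kdelta - β))
        = ((n : ℝ) - tr2 β - 1) • kn (kdelta - β) (kdelta - β)) ∧
    (hmul (kn (kdelta - β) (kdelta - β)) (kn β β) = 0) ∧
    (tr2 β ≠ 1 → tr2 β ≠ (n : ℝ) - 1 →
      (hmul ((tr2 β - 1)⁻¹ • kn β β) ((tr2 β - 1)⁻¹ • kn β β)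
          = (tr2 β - 1)⁻¹ • kn β β) ∧
      (hmul (((n : ℝ) - tr2 β - 1)⁻¹ • kn (kdelta - β) (kdelta - β))
            (((n : ℝ) - tr2 β - 1)⁻¹ • kn (kdelta - β) (kdelta - β))
          = ((n : ℝ) - tr2 β - 1)⁻¹ • kn (kdelta - β) (kdelta - β)) ∧
      (hmul ((tr2 β - 1)⁻¹ • kn β β)
            (((n : ℝ) - tr2 β - 1)⁻¹ • kn (kdelta - β) (kdelta - β)) = 0)) := by
  set γ : Fin n → Fin n → ℝ := kdelta - β with hγdef
  have hγ : ∀ a b, γ a b = kdelta a b - β a b := fun a b => rfl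
  have hPβ : ∀ a b, ∑ p, β a p * β b p = β a b := by
    intro a b
    have h := hproj b a
    simp only [comp2] at h
    calc ∑ p, β a p * β b p = ∑ p, β p a * β b p :=
          Finset.sum_congr rfl fun p _ => by rw [hβ a p]
      _ = β b a := h
      _ = β a b := hβ a b
  have hδ : ∀ (f : Fin n → ℝ) (a : Fin n), ∑ p, kdelta a p * f p = f a := by
    intro f a
    simp [kdelta, ite_mul, Finset.sum_ite_eq]
  have hsγ : IsSym2 γ := by
    intro a b
    simp only [hγ, kdelta, hβ a b, eq_comm]
  have h0 : ∀ a b, ∑ p, γ a p * β b p = 0 := by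
    intro a b
    have e : ∀ p, γ a p * β b p = kdelta a p * β b p - β a p * β b p := by
      intro p; rw [hγ]; ring
    simp only [e]
    rw [Finset.sum_sub_distrib, hδ (β b) a, hPβ a b, hβ a b, sub_self]
  have hPγ : ∀ a b, ∑ p, γ a p * γ b p = γ a b := by
    intro a b
    have e : ∀ p, γ a p * γ b p = kdelta a p * γ b p - (γ b p * β a p) := by
      intro p; rw [hγ, hγ]; ring
    have h0' : ∑ p, γ b p * β a p = 0 := h0 b a
    simp only [e]
    rw [Finset.sum_sub_distrib, hδ (γ b) a, h0', hγ b a, hγ a b, kdelta, kdelta, hβ a b]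
    simp [eq_comm]
  have htrγ : tr2 γ = (n : ℝ) - tr2 β := by
    simp only [tr2, hγ, kdelta, if_pos rfl, Finset.sum_sub_distrib, Finset.sum_const,
      Finset.card_univ, Fintype.card_fin, nsmul_eq_mul, mul_one]
    simp
  have P1 : hmul (kn β β) (kn β β) = (tr2 β - 1) • kn β β := hmul_kn_self β hβ hPβ
  have P2 : hmul (kn γ γ) (kn γ γ) = ((n : ℝ) - tr2 β - 1) • kn γ γ := by
    rw [hmul_kn_self γ hsγ hPγ, htrγ]
  have P3 : hmul (kn γ γ) (kn β β) = 0 := hmul_kn_cross γ β hsγ hβ h0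
  refine ⟨P1, P2, P3, fun h1 h2 => ?_⟩
  have ht : tr2 β - 1 ≠ 0 := sub_ne_zero.mpr h1
  have ht' : (n : ℝ) - tr2 β - 1 ≠ 0 := by
    intro h; apply h2; linarith
  refine ⟨?_, ?_, ?_⟩
  · rw [hmul_smul, P1, smul_smul]
    congr 1
    field_simp
  · rw [hmul_smul, P2, smul_smul]
    congr 1
    field_simp
  · rw [hmul_smul, hmul_comm, P3, smul_zero]
end
end

section
/- For a 2-form α on a Riemannian vector space, with α·α the curvature tensor (α·α)_{ijkl} = 2α_{ij}α_{kl} − α_{k[i}α_{j]l} + α_{l[i}α_{j]k}, the Hamilton product satisfies (α·α) ∗ (α·α) = |α|² α·α − 2(α∘α∘α)·α − 3(α∘α) ⩓ (α∘α), where ∘ denotes composition of the associated endomorphisms and ⩓ is the half Kulkarni–Nomizu product. -/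
noncomputable section

open BigOperators

/-- (α·β)_{ijkl} = α_{ij}β_{kl} + α_{kl}β_{ij} − α_{k[i}β_{j]l} + α_{l[i}β_{j]k}. -/
def cdot {n : ℕ} (α β : Fin n → Fin n → ℝ) :
    Fin n → Fin n → Fin n → Fin n → ℝ :=
  fun i j k l =>
    α i j * β k l + α k l * β i j
      - (1/2) * (α k i * β j l - α k j * β i l)
      + (1/2) * (α l i * β j k - α l j * β i k)

def Skew2 {n : ℕ} (α : Fin n → Fin n → ℝ) : Prop := ∀ i j, α j i = - α i j

def pair2 {n : ℕ} (α β : Fin n → Fin n → ℝ) : ℝ := ∑ i, ∑ j, α i j * β i j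

/-- `Sf α a b = ∑ p, α a p * α b p` (symmetric). -/
def Sf {n : ℕ} (α : Fin n → Fin n → ℝ) (a b : Fin n) : ℝ := ∑ p, α a p * α b p

/-- `Cf α a b = ∑ p q, α a p * α p q * α b q` (antisymmetric for skew α). -/
def Cf {n : ℕ} (α : Fin n → Fin n → ℝ) (a b : Fin n) : ℝ :=
  ∑ p, ∑ q, α a p * α p q * α b q

lemma Sf_symm {n : ℕ} (α : Fin n → Fin n → ℝ) (a b : Fin n) :
    Sf α b a = Sf α a b := by
  unfold Sf; exact Finset.sum_congr rfl fun p _ => mul_comm _ _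

lemma Cf_skew {n : ℕ} {α : Fin n → Fin n → ℝ} (hα : Skew2 α) (a b : Fin n) :
    Cf α b a = - Cf α a b := by
  unfold Cf
  rw [Finset.sum_comm, ← Finset.sum_neg_distrib]
  refine Finset.sum_congr rfl fun p _ => ?_
  rw [← Finset.sum_neg_distrib]
  refine Finset.sum_congr rfl fun q _ => ?_
  rw [hα p q]; ring

lemma cdot_self {n : ℕ} {α : Fin n → Fin n → ℝ} (hα : Skew2 α) (i p j q : Fin n) :
    cdot α α i p j q = 2 * (α i p * α j q) + α i j * α p q + α j p * α i q := by
  unfold cdot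
  rw [hα i j, hα i q, hα j p, hα p q]; ring

lemma dsum_factor {n : ℕ} (u v : Fin n → ℝ) :
    ∑ p, ∑ q, u p * v q = (∑ p, u p) * (∑ q, v q) := by
  rw [Finset.sum_mul_sum]

lemma bil_eq {n : ℕ} {α : Fin n → Fin n → ℝ} (hα : Skew2 α) (i j k l : Fin n) :
    Bil (cdot α α) (cdot α α) i j k l =
      4 * (Sf α i k * Sf α j l) + 2 * (α k l * Cf α i j)
        + 2 * (Sf α i l * Sf α j k) + 2 * (α i j * Cf α k l)
        + α i j * α k l * pair2 α α + α i j * Cf α l k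
        + 2 * (Sf α j k * Sf α i l) + α k l * Cf α j i
        + Sf α j l * Sf α i k := by
  have key : ∀ p q : Fin n,
      cdot α α i p j q * cdot α α k p l q + cdot α α i p j q * cdot α α k p l q
      = (8 * (α i p * α k p)) * (α j q * α l q)
        + α k l * (4 * (α i p * α p q * α j q))
        + (4 * (α i p * α l p)) * (α j q * α k q)
        + α i j * (4 * (α k p * α p q * α l q))
        + (α i j * α k l) * (2 * (α p q * α p q))
        + α i j * (2 * (α l p * α p q * α k q))
        + (4 * (α j p * α k p)) * (α i q * α l q)
        + α k l * (2 * (α j p * α p q * α i q))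
        + (2 * (α j p * α l p)) * (α i q * α k q) := by
    intro p q
    rw [cdot_self hα i p j q, cdot_self hα k p l q]; ring
  have hsum : ∑ p, ∑ q, (cdot α α i p j q * cdot α α k p l q
        + cdot α α i p j q * cdot α α k p l q)
      = (∑ p, ∑ q, (8 * (α i p * α k p)) * (α j q * α l q))
        + (∑ p, ∑ q, α k l * (4 * (α i p * α p q * α j q)))
        + (∑ p, ∑ q, (4 * (α i p * α l p)) * (α j q * α k q))
        + (∑ p, ∑ q, α i j * (4 * (α k p * α p q * α l q)))
        + (∑ p, ∑ q, (α i j * α k l) * (2 * (α p q * α p q)))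
        + (∑ p, ∑ q, α i j * (2 * (α l p * α p q * α k q)))
        + (∑ p, ∑ q, (4 * (α j p * α k p)) * (α i q * α l q))
        + (∑ p, ∑ q, α k l * (2 * (α j p * α p q * α i q)))
        + (∑ p, ∑ q, (2 * (α j p * α l p)) * (α i q * α k q)) := by
    simp only [key, Finset.sum_add_distrib]
  have h1 : ∑ p, ∑ q, (8 * (α i p * α k p)) * (α j q * α l q)
      = 8 * (Sf α i k * Sf α j l) := by
    rw [dsum_factor, ← Finset.mul_sum]; unfold Sf; ring
  have h3 : ∑ p, ∑ q, (4 * (α i p * α l p)) * (α j q * α k q)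
      = 4 * (Sf α i l * Sf α j k) := by
    rw [dsum_factor, ← Finset.mul_sum]; unfold Sf; ring
  have h7 : ∑ p, ∑ q, (4 * (α j p * α k p)) * (α i q * α l q)
      = 4 * (Sf α j k * Sf α i l) := by
    rw [dsum_factor, ← Finset.mul_sum]; unfold Sf; ring
  have h9 : ∑ p, ∑ q, (2 * (α j p * α l p)) * (α i q * α k q)
      = 2 * (Sf α j l * Sf α i k) := by
    rw [dsum_factor, ← Finset.mul_sum]; unfold Sf; ring
  have h2 : ∑ p, ∑ q, α k l * (4 * (α i p * α p q * α j q))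
      = α k l * (4 * Cf α i j) := by
    simp only [Cf, Finset.mul_sum]
  have h4 : ∑ p, ∑ q, α i j * (4 * (α k p * α p q * α l q))
      = α i j * (4 * Cf α k l) := by
    simp only [Cf, Finset.mul_sum]
  have h6 : ∑ p, ∑ q, α i j * (2 * (α l p * α p q * α k q))
      = α i j * (2 * Cf α l k) := by
    simp only [Cf, Finset.mul_sum]
  have h8 : ∑ p, ∑ q, α k l * (2 * (α j p * α p q * α i q))
      = α k l * (2 * Cf α j i) := by
    simp only [Cf, Finset.mul_sum]
  have h5 : ∑ p, ∑ q, (α i j * α k l) * (2 * (α p q * α p q))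
      = (α i j * α k l) * (2 * pair2 α α) := by
    simp only [pair2, Finset.mul_sum]
  unfold Bil
  rw [hsum, h1, h2, h3, h4, h5, h6, h7, h8, h9]; ring

lemma comp2_eq {n : ℕ} {α : Fin n → Fin n → ℝ} (hα : Skew2 α) (i j : Fin n) :
    comp2 α α i j = - Sf α i j := by
  unfold comp2 Sf
  rw [← Finset.sum_neg_distrib]
  refine Finset.sum_congr rfl fun p _ => ?_
  rw [hα j p]; ring

lemma comp3_eq {n : ℕ} {α : Fin n → Fin n → ℝ} (hα : Skew2 α) (i j : Fin n) :
    comp2 α (comp2 α α) i j = - Cf α i j := by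
  unfold comp2 Cf
  rw [Finset.sum_comm, ← Finset.sum_neg_distrib]
  refine Finset.sum_congr rfl fun p _ => ?_
  rw [Finset.mul_sum, ← Finset.sum_neg_distrib]
  refine Finset.sum_congr rfl fun q _ => ?_
  rw [hα j p]; ring

/-- For a 2-form α:
(α·α) ∗ (α·α) = |α|² α·α − 2(α∘α∘α)·α − 3(α∘α) ⩓ (α∘α). -/
theorem cdot_square_hamilton_square {n : ℕ}
    (α : Fin n → Fin n → ℝ) (hα : Skew2 α) :
    hmul (cdot α α) (cdot α α)
      = pair2 α α • cdot α α - (2 : ℝ) • cdot (comp2 α (comp2 α α)) α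
          - (3 : ℝ) • kn (comp2 α α) (comp2 α α) := by
  funext i j k l
  simp only [hmul, Pi.sub_apply, Pi.smul_apply, smul_eq_mul]
  rw [bil_eq hα i j k l, bil_eq hα i j l k, bil_eq hα i k j l, bil_eq hα i l j k]
  simp only [cdot, kn, comp3_eq hα, comp2_eq hα]
  simp only [Sf_symm α j k, Sf_symm α j l, Sf_symm α k l, Sf_symm α i j,
    Sf_symm α i k, Sf_symm α i l, Cf_skew hα k l, Cf_skew hα i j, Cf_skew hα j l,
    Cf_skew hα i k, Cf_skew hα j k, Cf_skew hα i l, hα k l, hα i k, hα j k,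
    hα i l, hα j l, hα i j]
  ring
end
end

section
/- For m×m real skew-symmetric matrices A and B with A² = −I = B², the commutator satisfies tr([A,B]ᵀ[A,B]) ≤ 4m. -/
open Matrix

/-- For m×m real skew-symmetric matrices A, B with A² = −I = B²,
tr([A,B]ᵀ [A,B]) ≤ 4m. -/
theorem commutator_trace_bound {m : ℕ} (A B : Matrix (Fin m) (Fin m) ℝ)
    (hA : Aᵀ = -A) (hB : Bᵀ = -B)
    (hA2 : A * A = -1) (hB2 : B * B = -1) :
    Matrix.trace ((A * B - B * A)ᵀ * (A * B - B * A)) ≤ 4 * (m : ℝ) := by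
  set M := A * B with hM
  -- M is orthogonal
  have hMt : Mᵀ * M = 1 := by
    have h1 : Mᵀ * M = B * (A * A) * B := by
      rw [hM, transpose_mul, hA, hB]
      noncomm_ring
    rw [h1, hA2, Matrix.mul_neg, Matrix.mul_one, Matrix.neg_mul, hB2, neg_neg]
  -- transpose of the commutator
  have hct : (A * B - B * A)ᵀ = B * A - A * B := by
    rw [transpose_sub, transpose_mul, transpose_mul, hA, hB, Matrix.neg_mul,
      Matrix.mul_neg, neg_neg, Matrix.neg_mul, Matrix.mul_neg, neg_neg]
  -- expand the product
  have hexp : (A * B - B * A) * (A * B - B * A)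
      = B * (A * A) * B + A * (B * B) * A - B * A * B * A - A * B * A * B
      + ((A*B-B*A)*(A*B-B*A) - ((B*A-A*B)*(A*B-B*A))) := by
    noncomm_ring
  have hprod : (A * B - B * A)ᵀ * (A * B - B * A)
      = (1 : Matrix (Fin m) (Fin m) ℝ) + 1 - B * A * B * A - A * B * A * B := by
    rw [hct]
    have : (B * A - A * B) * (A * B - B * A)
        = B * (A * A) * B + A * (B * B) * A - B * A * B * A - A * B * A * B := by
      noncomm_ring
    rw [this, hA2, hB2]
    simp [Matrix.mul_neg, Matrix.neg_mul, hA2, hB2]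
  have htrcomm : trace (B * A * B * A) = trace (A * B * A * B) := by
    have := Matrix.trace_mul_comm B (A * B * A)
    simpa [Matrix.mul_assoc] using this
  have htr1 : trace (1 : Matrix (Fin m) (Fin m) ℝ) = (m : ℝ) := by
    simp [Matrix.trace_one]
  -- key inequality: trace (M * M) ≥ -m
  have hS : trace ((M + Mᵀ)ᵀ * (M + Mᵀ)) = 2 * trace (M * M) + 2 * (m : ℝ) := by
    have h1 : (M + Mᵀ)ᵀ * (M + Mᵀ) = Mᵀ * M + Mᵀ * Mᵀ + M * M + M * Mᵀ := by
      rw [transpose_add, transpose_transpose]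
      noncomm_ring
    rw [h1]
    have h2 : trace (Mᵀ * Mᵀ) = trace ((M * M)ᵀ) := congrArg _ (transpose_mul M M).symm
    have h3 : trace (M * Mᵀ) = trace (Mᵀ * M) := Matrix.trace_mul_comm M Mᵀ
    rw [trace_add, trace_add, trace_add, h2, trace_transpose, h3, hMt, htr1]
    ring
  have hSnn : 0 ≤ trace ((M + Mᵀ)ᵀ * (M + Mᵀ)) := by
    have : trace ((M + Mᵀ)ᵀ * (M + Mᵀ))
        = ∑ i, ∑ j, (M + Mᵀ) j i * (M + Mᵀ) j i := by
      simp [Matrix.trace, Matrix.mul_apply, Matrix.diag]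
    rw [this]
    refine Finset.sum_nonneg fun i _ => Finset.sum_nonneg fun j _ => mul_self_nonneg _
  have hMM : -(m : ℝ) ≤ trace (M * M) := by nlinarith [hS, hSnn]
  have hMM2 : -(m : ℝ) ≤ trace (A * B * A * B) := by
    rw [hM] at hMM
    simpa [Matrix.mul_assoc] using hMM
  rw [hprod, trace_sub, trace_sub, trace_add, htr1, htrcomm]
  linarith
end

section
/- If n is odd, there do not exist n×n real matrices P, Q with P skew-symmetric, Q symmetric, tr Q = 0, PQ + QP = 0, and Q² − P² = I. -/
/-! Over `ℂ` the matrix `B = Q + iP` satisfies `B² = Q² − P² + i(PQ + QP) = 1` and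
`tr B = tr Q + i tr P = 0`. Then `(1 + B)/2` is idempotent, so its trace `n/2` is its rank,
a natural number, and `n` is even. -/

open Matrix

namespace Matrix

variable {ι K : Type*} [Fintype ι] [Field K]

theorem trace_eq_zero_of_transpose_eq_neg {R : Type*} [AddCommGroup R] [IsAddTorsionFree R]
    {A : Matrix ι ι R} (hA : Aᵀ = -A) : A.trace = 0 := by
  rw [← self_eq_neg, ← trace_neg, ← hA, trace_transpose]

variable [DecidableEq ι]

theorem IsIdempotentElem.trace_eq_rank {E : Matrix ι ι K} (hE : IsIdempotentElem E) :
    E.trace = E.rank := by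
  have hf : IsIdempotentElem (toLin' E) := hE.map toLinAlgEquiv'
  rw [← trace_toLin'_eq, (LinearMap.IsIdempotentElem.isProj_range _ hf).trace, rank,
    toLin'_apply']

theorem even_card_of_mul_self_eq_one_of_trace_eq_zero [CharZero K] {B : Matrix ι ι K}
    (hB : B * B = 1) (htr : B.trace = 0) : Even (Fintype.card ι) := by
  set E : Matrix ι ι K := (2⁻¹ : K) • (1 + B)
  have hE : IsIdempotentElem E := by
    simp only [E, IsIdempotentElem, smul_mul_smul_comm, add_mul, mul_add, one_mul, mul_one, hB]
    match_scalars <;> ring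
  have htrE : (2⁻¹ : K) * Fintype.card ι = E.rank := by
    rw [← hE.trace_eq_rank, trace_smul, trace_add, trace_one, htr, add_zero, smul_eq_mul]
  refine ⟨E.rank, ?_⟩
  exact_mod_cast (by linear_combination 2 * htrE : (Fintype.card ι : K) = E.rank + E.rank)

end Matrix

theorem add_I_smul_mul_self_eq_one {A : Type*} [Ring A] [Algebra ℂ A] {p q : A}
    (hanti : p * q + q * p = 0) (hsq : q * q - p * p = 1) :
    (q + Complex.I • p) * (q + Complex.I • p) = 1 := by
  simp only [add_mul, mul_add, mul_smul_comm, smul_mul_assoc, smul_add, smul_smul,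
    Complex.I_mul_I]
  linear_combination (norm := module) hsq + Complex.I • hanti

/-- If n is odd there are no n×n real matrices P, Q with P skew-symmetric,
Q symmetric, tr Q = 0, PQ + QP = 0 and Q² − P² = I. -/
theorem no_odd_anticommuting_pair {n : ℕ} (hn : Odd n) :
    ¬ ∃ P Q : Matrix (Fin n) (Fin n) ℝ,
        Pᵀ = -P ∧ Qᵀ = Q ∧ Q.trace = 0 ∧ P * Q + Q * P = 0 ∧ Q * Q - P * P = 1 := by
  rintro ⟨P, Q, hP, -, htQ, hanti, hsq⟩
  let φ := Complex.ofRealHom.mapMatrix (m := Fin n)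
  have hB : (φ Q + Complex.I • φ P) * (φ Q + Complex.I • φ P) = 1 :=
    add_I_smul_mul_self_eq_one (by rw [← map_mul, ← map_mul, ← map_add, hanti, map_zero])
      (by rw [← map_mul, ← map_mul, ← map_sub, hsq, map_one])
  have htrB : (φ Q + Complex.I • φ P).trace = 0 := by
    simp [φ, ← AddMonoidHom.map_trace, htQ, trace_eq_zero_of_transpose_eq_neg hP]
  simpa [Nat.not_even_iff_odd.mpr hn] using even_card_of_mul_self_eq_one_of_trace_eq_zero hB htrB
end

section
/- A nontrivial finite-dimensional commutative real algebra admitting an invariant inner product contains a nontrivial idempotent: if (A, ·) is commutative with · not identically zero, and h is a positive-definite inner product on A with h(x·y, z) = h(x, y·z) for all x, y, z, then there exists e ≠ 0 with e·e = e. -/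
open scoped RealInnerProductSpace

/-- A nontrivial finite-dimensional commutative real algebra admitting an
invariant (positive-definite) inner product contains a nontrivial idempotent. -/
theorem exists_idempotent_of_invariant_inner
    {A : Type*} [NormedAddCommGroup A] [InnerProductSpace ℝ A] [FiniteDimensional ℝ A]
    (mul : A →ₗ[ℝ] A →ₗ[ℝ] A)
    (hcomm : ∀ x y : A, mul x y = mul y x)
    (hinv : ∀ x y z : A, ⟪mul x y, z⟫ = ⟪x, mul y z⟫)
    (hnontriv : ∃ x y : A, mul x y ≠ 0) :
    ∃ e : A, e ≠ 0 ∧ mul e e = e := by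
  classical
  -- symmetry lemmas for the trilinear form
  have hrot : ∀ a b c : A, ⟪mul a b, c⟫ = ⟪mul b c, a⟫ := fun a b c => by
    rw [hinv, real_inner_comm]
  -- Step 1: the cubic form is not identically zero.
  have hT : ∃ x : A, ⟪mul x x, x⟫ ≠ 0 := by
    by_contra h
    push_neg at h
    have key : ∀ a b : A, ⟪mul a a, b⟫ = 0 := by
      intro a b
      have h1 := h (a + b)
      have h2 := h (a - b)
      simp only [map_add, map_sub, LinearMap.add_apply, LinearMap.sub_apply,
        inner_add_left, inner_add_right, inner_sub_left, inner_sub_right] at h1 h2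
      have e1 : ⟪mul a b, a⟫ = ⟪mul a a, b⟫ := (hrot a b a).trans (hrot b a a)
      have e2 : ⟪mul b a, a⟫ = ⟪mul a a, b⟫ := hrot b a a
      have e3 : ⟪mul a b, b⟫ = ⟪mul b b, a⟫ := hrot a b b
      have e4 : ⟪mul b a, b⟫ = ⟪mul b b, a⟫ := (hrot b a b).trans (hrot a b b)
      have ha := h a; have hb := h b
      linarith [h1, h2, e1, e2, e3, e4, ha, hb]
    have key2 : ∀ a b c : A, ⟪mul a b, c⟫ = 0 := by
      intro a b c
      have h1 := key (a + b) c
      simp only [map_add, LinearMap.add_apply, inner_add_left, inner_add_right] at h1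
      have e1 : ⟪mul b a, c⟫ = ⟪mul a b, c⟫ := by rw [hcomm b a]
      linarith [h1, e1, key a c, key b c]
    obtain ⟨x, y, hxy⟩ := hnontriv
    exact hxy (by
      have := key2 x y (mul x y)
      rwa [inner_self_eq_zero] at this)
  -- Step 2: pick a point where the cubic form is positive
  obtain ⟨x₀, hx₀⟩ := hT
  have hx0pos : ∃ x : A, 0 < ⟪mul x x, x⟫ := by
    rcases lt_or_gt_of_ne hx₀ with hneg | hpos
    · refine ⟨-x₀, ?_⟩
      simp only [map_neg, inner_neg_neg, neg_neg, inner_neg_left, inner_neg_right]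
      simpa using hneg
    · exact ⟨x₀, hpos⟩
  obtain ⟨w, hw⟩ := hx0pos
  have hwne : w ≠ 0 := by
    rintro rfl; simp at hw
  -- the continuous bilinear version of `mul`
  let M₁ : A →ₗ[ℝ] (A →L[ℝ] A) :=
    { toFun := fun x => LinearMap.toContinuousLinearMap (mul x)
      map_add' := fun x y => by ext z; simp
      map_smul' := fun c x => by ext z; simp }
  let M : A →L[ℝ] A →L[ℝ] A := LinearMap.toContinuousLinearMap M₁
  have hM : ∀ x y : A, M x y = mul x y := fun x y => rfl
  -- objective function
  set F : A → ℝ := fun x => ⟪mul x x, x⟫ with hF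
  have hFcont : Continuous F := by
    have : F = fun x => ⟪M x x, x⟫ := by
      funext x; rw [hM]
    rw [this]
    exact Continuous.inner
      (M.isBoundedBilinearMap.continuous.comp (continuous_id.prodMk continuous_id))
      continuous_id
  -- maximize F on the unit sphere
  have hcpt : IsCompact (Metric.sphere (0 : A) 1) := isCompact_sphere 0 1
  have hne : (Metric.sphere (0 : A) 1).Nonempty := by
    refine ⟨‖w‖⁻¹ • w, ?_⟩
    simp [norm_smul, inv_mul_cancel₀ (norm_ne_zero_iff.mpr hwne)]
  obtain ⟨v, hvS, hvmax⟩ := hcpt.exists_isMaxOn hne hFcont.continuousOn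
  have hvnorm : ‖v‖ = 1 := by simpa using hvS
  have hvne : v ≠ 0 := by
    intro h; rw [h] at hvnorm; simp at hvnorm
  -- F v > 0
  have hFvpos : 0 < F v := by
    have hu : (‖w‖⁻¹ • w) ∈ Metric.sphere (0 : A) 1 := by
      simp [norm_smul, inv_mul_cancel₀ (norm_ne_zero_iff.mpr hwne)]
    have hle := hvmax hu
    have : F (‖w‖⁻¹ • w) = ‖w‖⁻¹ ^ 3 * F w := by
      simp only [hF, map_smul, LinearMap.smul_apply, real_inner_smul_left,
        real_inner_smul_right]
      ring
    have hpos : 0 < F (‖w‖⁻¹ • w) := by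
      rw [this]
      have hnw : (0:ℝ) < ‖w‖ := norm_pos_iff.mpr hwne
      have : (0:ℝ) < ‖w‖⁻¹ ^ 3 := by positivity
      exact mul_pos this hw
    exact lt_of_lt_of_le hpos hle
  -- Lagrange multipliers
  set c : A → ℝ := fun x => ⟪x, x⟫ with hc
  have hsphere : {x : A | c x = c v} = Metric.sphere (0 : A) 1 := by
    ext x
    simp only [Set.mem_setOf_eq, mem_sphere_iff_norm, sub_zero, hc]
    rw [real_inner_self_eq_norm_sq, real_inner_self_eq_norm_sq, hvnorm]
    constructor
    · intro h
      have h' : (‖x‖ - 1) * (‖x‖ + 1) = 0 := by linear_combination h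
      rcases mul_eq_zero.mp h' with h1 | h1
      · linarith
      · linarith [norm_nonneg x]
    · intro h; rw [h]
  have hextr : IsLocalExtrOn F {x : A | c x = c v} v := by
    rw [hsphere]
    exact Or.inr (hvmax.localize)
  have hid := hasStrictFDerivAt_id (𝕜 := ℝ) v
  have hc' : HasStrictFDerivAt c
      ((fderivInnerCLM ℝ ((id v : A), (id v : A))).comp
        ((ContinuousLinearMap.id ℝ A).prod (ContinuousLinearMap.id ℝ A))) v :=
    HasStrictFDerivAt.inner (𝕜 := ℝ) hid hid
  have hB : HasStrictFDerivAt (fun x : A => M x x)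
      (M.precompR A (id v) (ContinuousLinearMap.id ℝ A)
        + M.precompL A (ContinuousLinearMap.id ℝ A) (id v)) v :=
    M.hasStrictFDerivAt_of_bilinear hid hid
  have hF' : HasStrictFDerivAt F
      ((fderivInnerCLM ℝ ((fun x : A => M x x) v, (id v : A))).comp
        ((M.precompR A (id v) (ContinuousLinearMap.id ℝ A)
          + M.precompL A (ContinuousLinearMap.id ℝ A) (id v)).prod
          (ContinuousLinearMap.id ℝ A))) v := by
    exact HasStrictFDerivAt.inner (𝕜 := ℝ) hB hid
  obtain ⟨a, b, hab, hsum⟩ := hextr.exists_multipliers_of_hasStrictFDerivAt_1d hc' hF'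
  -- extract the pointwise equation
  have heq : ∀ h : A, 2 * a * ⟪v, h⟫ + 3 * b * ⟪mul v v, h⟫ = 0 := by
    intro h
    have hth := congrArg (fun L : A →L[ℝ] ℝ => L h) hsum
    simp only [ContinuousLinearMap.add_apply, ContinuousLinearMap.smul_apply,
      ContinuousLinearMap.comp_apply, ContinuousLinearMap.prod_apply,
      ContinuousLinearMap.coe_id', id_eq, fderivInnerCLM_apply,
      ContinuousLinearMap.precompR_apply, ContinuousLinearMap.precompL_apply,
      ContinuousLinearMap.compL_apply, ContinuousLinearMap.coe_comp', Function.comp_apply,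
      ContinuousLinearMap.zero_apply, smul_eq_mul, inner_add_left, inner_add_right] at hth
    have hM' : ∀ x y : A, (M x) y = mul x y := fun _ _ => rfl
    simp only [hM'] at hth
    have e1 : ⟪h, v⟫ = ⟪v, h⟫ := (real_inner_comm h v).symm
    have eA : ⟪mul v h, v⟫ = ⟪mul v v, h⟫ := (hrot v h v).trans (hrot h v v)
    have eB : ⟪mul h v, v⟫ = ⟪mul v v, h⟫ := hrot h v v
    rw [e1, eA, eB] at hth
    linear_combination hth
  -- conclude mul v v = λ • v
  have hvec : (2 * a) • v + (3 * b) • (mul v v) = 0 := by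
    have h0 : ∀ h : A, ⟪(2 * a) • v + (3 * b) • (mul v v), h⟫ = ⟪(0 : A), h⟫ := by
      intro h
      rw [inner_add_left, real_inner_smul_left, real_inner_smul_left, inner_zero_left]
      exact heq h
    exact ext_inner_right ℝ h0
  have hbne : b ≠ 0 := by
    intro hb
    rw [hb] at hvec hab
    simp only [mul_zero, zero_smul, add_zero, smul_eq_zero] at hvec
    rcases hvec with h2a | hv0
    · have ha : a = 0 := by linarith
      exact hab (by simp [ha, hb, Prod.ext_iff])
    · exact hvne hv0
  -- mul v v = λ • v with λ = F v
  set lam : ℝ := F v with hlam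
  have hmulvv : mul v v = (-(2 * a) / (3 * b)) • v := by
    have : (3 * b) • (mul v v) = -((2 * a) • v) := by
      rw [eq_neg_iff_add_eq_zero, add_comm]; exact hvec
    have h3b : (3 : ℝ) * b ≠ 0 := by
      intro h; apply hbne; linarith [mul_eq_zero.mp h]
    calc mul v v = ((3 * b)⁻¹ * (3 * b)) • mul v v := by
          rw [inv_mul_cancel₀ h3b, one_smul]
      _ = (3 * b)⁻¹ • ((3 * b) • mul v v) := by rw [mul_smul]
      _ = (3 * b)⁻¹ • (-((2 * a) • v)) := by rw [this]
      _ = (-(2 * a) / (3 * b)) • v := by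
          rw [smul_neg, ← mul_smul, ← neg_smul]
          congr 1
          field_simp
  have hlameq : mul v v = lam • v := by
    have hvv : ⟪v, v⟫ = 1 := by
      rw [real_inner_self_eq_norm_sq, hvnorm]; norm_num
    have hFv : lam = -(2 * a) / (3 * b) := by
      show ⟪mul v v, v⟫ = _
      rw [hmulvv, real_inner_smul_left, hvv, mul_one]
    rw [hFv, hmulvv]
  -- rescale
  refine ⟨lam⁻¹ • v, ?_, ?_⟩
  · exact smul_ne_zero (inv_ne_zero (ne_of_gt hFvpos)) hvne
  · have hlne : lam ≠ 0 := ne_of_gt hFvpos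
    have hmm : mul (lam⁻¹ • v) (lam⁻¹ • v) = (lam⁻¹ * lam⁻¹) • mul v v := by
      simp only [map_smul, LinearMap.smul_apply, smul_smul]
    rw [hmm, hlameq, smul_smul]
    congr 1
    field_simp
end

section
/- Let (A, ·) be a finite-dimensional nonzero commutative real algebra with nontrivial multiplication on which a connected Lie group G with simple Lie algebra acts irreducibly by algebra automorphisms. Then A is simple: it has no ideals other than {0} and A. -/
/-!
A nonzero ideal contains a minimal one, `I`. Automorphisms permute minimal ideals, and two
distinct minimal ideals meet in `0`, so by commutativity their product is `0`. The translates
of `I` span `A`, and the annihilator of `A` is an invariant proper subspace, hence `0`; therefore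
`I·I ≠ 0`. Consequently `g` maps `I` into itself exactly when `I · gI ≠ 0`: the first condition
is closed in `g`, the second open. As `G` is connected, `I` is invariant, hence `I = A`.
-/

section Ideals

variable {R A : Type*} [CommRing R] [AddCommGroup A] [Module R A] (mul : A →ₗ[R] A →ₗ[R] A)

def IsIdeal (J : Submodule R A) : Prop := ∀ x : A, ∀ y ∈ J, mul x y ∈ J

def IsMinimalIdeal (J : Submodule R A) : Prop := Minimal (fun I => IsIdeal mul I ∧ I ≠ ⊥) J

variable {mul}

theorem IsIdeal.inf {I J : Submodule R A} (hI : IsIdeal mul I) (hJ : IsIdeal mul J) :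
    IsIdeal mul (I ⊓ J) :=
  fun x y hy => ⟨hI x y hy.1, hJ x y hy.2⟩

theorem exists_isMinimalIdeal_le [IsArtinian R A] {J : Submodule R A} (hJ : IsIdeal mul J)
    (hJ0 : J ≠ ⊥) : ∃ I ≤ J, IsMinimalIdeal mul I :=
  exists_minimal_le_of_wellFoundedLT _ J ⟨hJ, hJ0⟩

theorem symm_map_mul {e : A ≃ₗ[R] A} (he : ∀ x y, e (mul x y) = mul (e x) (e y)) (x y : A) :
    e.symm (mul x y) = mul (e.symm x) (e.symm y) := by
  rw [e.symm_apply_eq, he, e.apply_symm_apply, e.apply_symm_apply]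

theorem IsIdeal.map {J : Submodule R A} (hJ : IsIdeal mul J) {e : A ≃ₗ[R] A}
    (he : ∀ x y, e (mul x y) = mul (e x) (e y)) : IsIdeal mul (J.map (e : A →ₗ[R] A)) := by
  rintro x _ ⟨y, hy, rfl⟩
  exact ⟨mul (e.symm x) y, hJ _ y hy, by simp [he]⟩

theorem IsMinimalIdeal.map {I : Submodule R A} (hI : IsMinimalIdeal mul I) {e : A ≃ₗ[R] A}
    (he : ∀ x y, e (mul x y) = mul (e x) (e y)) : IsMinimalIdeal mul (I.map (e : A →ₗ[R] A)) := by
  refine ⟨⟨hI.prop.1.map he, by simpa using hI.prop.2⟩, fun J hJ hle => ?_⟩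
  have hJe : J.map (e.symm : A →ₗ[R] A) ≤ I := by
    rintro _ ⟨y, hy, rfl⟩
    obtain ⟨z, hz, rfl⟩ := hle hy
    simpa using hz
  rw [← hI.eq_of_le ⟨hJ.1.map (symm_map_mul he), by simpa using hJ.2⟩ hJe]
  rintro _ ⟨_, ⟨y, hy, rfl⟩, rfl⟩
  simpa using hy

theorem IsMinimalIdeal.mul_eq_zero_of_ne (hcomm : ∀ x y : A, mul x y = mul y x)
    {I I' : Submodule R A} (hI : IsMinimalIdeal mul I) (hI' : IsMinimalIdeal mul I')
    (hne : I ≠ I') {x y : A} (hx : x ∈ I) (hy : y ∈ I') : mul x y = 0 := by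
  have hinf : I ⊓ I' = ⊥ := by
    by_contra h
    have hideal : IsIdeal mul (I ⊓ I') := hI.prop.1.inf hI'.prop.1
    exact hne ((hI.eq_of_le ⟨hideal, h⟩ inf_le_left).symm.trans
      (hI'.eq_of_le ⟨hideal, h⟩ inf_le_right))
  have hxy : mul x y ∈ I ⊓ I' := ⟨hcomm x y ▸ hI.prop.1 y x hx, hI'.prop.1 x y hy⟩
  rwa [hinf, Submodule.mem_bot] at hxy

theorem IsMinimalIdeal.map_le_iff_exists_mul_ne_zero (hcomm : ∀ x y : A, mul x y = mul y x)
    {I : Submodule R A} (hI : IsMinimalIdeal mul I) (hII : ∃ x ∈ I, ∃ y ∈ I, mul x y ≠ 0)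
    {e : A ≃ₗ[R] A} (he : ∀ x y, e (mul x y) = mul (e x) (e y)) :
    I.map (e : A →ₗ[R] A) ≤ I ↔ ∃ x ∈ I, ∃ y ∈ I, mul x (e y) ≠ 0 := by
  constructor
  · intro hle
    obtain ⟨x, hx, y, hy, hxy⟩ := hII
    rw [← hI.eq_of_le (hI.map he).prop hle] at hy
    obtain ⟨z, hz, rfl⟩ := hy
    exact ⟨x, hx, z, hz, hxy⟩
  · rintro ⟨x, hx, y, hy, hxy⟩
    by_contra hle
    exact hxy (hI.mul_eq_zero_of_ne hcomm (hI.map he) (fun h => hle h.ge) hx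
      (Submodule.mem_map_of_mem hy))

theorem map_mem_ker {e : A ≃ₗ[R] A} (he : ∀ x y, e (mul x y) = mul (e x) (e y)) {x : A}
    (hx : x ∈ LinearMap.ker mul) : e x ∈ LinearMap.ker mul := by
  rw [LinearMap.mem_ker] at hx ⊢
  ext y
  rw [← e.apply_symm_apply y, ← he, hx]
  simp

end Ideals

section Irreducible

variable {R A G : Type*} [CommRing R] [AddCommGroup A] [Module R A] [Group G]
  {mul : A →ₗ[R] A →ₗ[R] A} (ρ : G →* (A ≃ₗ[R] A))

theorem iSup_map_eq_top_of_irreducible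
    (hirr : ∀ W : Submodule R A, (∀ g : G, ∀ x ∈ W, ρ g x ∈ W) → W = ⊥ ∨ W = ⊤)
    {W : Submodule R A} (hW : W ≠ ⊥) : ⨆ g, W.map (ρ g : A →ₗ[R] A) = ⊤ := by
  refine (hirr _ fun h x hx => ?_).resolve_left fun hbot => hW ?_
  · have hle : (⨆ g, W.map (ρ g : A →ₗ[R] A)).map (ρ h : A →ₗ[R] A)
        ≤ ⨆ g, W.map (ρ g : A →ₗ[R] A) := by
      rw [Submodule.map_iSup]
      refine iSup_le fun g => le_iSup_of_le (h * g) ?_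
      rintro _ ⟨_, ⟨y, hy, rfl⟩, rfl⟩
      exact ⟨y, hy, by simp⟩
    exact hle (Submodule.mem_map_of_mem hx)
  · rw [eq_bot_iff, ← hbot]
    exact le_iSup_of_le 1 (by simp)

theorem ker_eq_bot_of_irreducible (hmul : mul ≠ 0)
    (hauto : ∀ (g : G) (x y : A), ρ g (mul x y) = mul (ρ g x) (ρ g y))
    (hirr : ∀ W : Submodule R A, (∀ g : G, ∀ x ∈ W, ρ g x ∈ W) → W = ⊥ ∨ W = ⊤) :
    LinearMap.ker mul = ⊥ :=
  (hirr _ fun g _ hx => map_mem_ker (hauto g) hx).resolve_right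
    (LinearMap.ker_eq_top.not.mpr hmul)

theorem IsMinimalIdeal.exists_mul_ne_zero (hcomm : ∀ x y : A, mul x y = mul y x)
    (hmul : mul ≠ 0) (hauto : ∀ (g : G) (x y : A), ρ g (mul x y) = mul (ρ g x) (ρ g y))
    (hirr : ∀ W : Submodule R A, (∀ g : G, ∀ x ∈ W, ρ g x ∈ W) → W = ⊥ ∨ W = ⊤)
    {I : Submodule R A} (hI : IsMinimalIdeal mul I) : ∃ x ∈ I, ∃ y ∈ I, mul x y ≠ 0 := by
  by_contra! hII
  have htranslate : ∀ x ∈ I, ∀ g, I.map (ρ g : A →ₗ[R] A) ≤ LinearMap.ker (mul x) := by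
    rintro x hx g _ ⟨y, hy, rfl⟩
    by_cases hg : I.map (ρ g : A →ₗ[R] A) = I
    · exact hII x hx _ (hg ▸ Submodule.mem_map_of_mem hy)
    · exact hI.mul_eq_zero_of_ne hcomm (hI.map (hauto g)) (Ne.symm hg) hx
        (Submodule.mem_map_of_mem hy)
  have hker : I ≤ LinearMap.ker mul := fun x hx => by
    have hspan := iSup_map_eq_top_of_irreducible ρ hirr hI.prop.2 ▸ iSup_le (htranslate x hx)
    exact LinearMap.ext fun y => hspan Submodule.mem_top
  rw [ker_eq_bot_of_irreducible ρ hmul hauto hirr, le_bot_iff] at hker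
  exact hI.prop.2 hker

end Irreducible

section Connected

variable {𝕜 A G : Type*} [NontriviallyNormedField 𝕜] [CompleteSpace 𝕜] [AddCommGroup A]
  [TopologicalSpace A] [IsTopologicalAddGroup A] [Module 𝕜 A] [ContinuousSMul 𝕜 A] [T2Space A]
  [FiniteDimensional 𝕜 A] [Group G] [TopologicalSpace G] {mul : A →ₗ[𝕜] A →ₗ[𝕜] A}
  (ρ : G →* (A ≃ₗ[𝕜] A))

theorem isClosed_setOf_map_le (hcont : ∀ x, Continuous fun g => ρ g x) (W : Submodule 𝕜 A) :
    IsClosed {g | W.map (ρ g : A →ₗ[𝕜] A) ≤ W} := by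
  have hset : {g | W.map (ρ g : A →ₗ[𝕜] A) ≤ W} = ⋂ x ∈ W, (fun g => ρ g x) ⁻¹' W := by
    ext g
    rw [Set.mem_iInter₂]
    exact Submodule.map_le_iff_le_comap
  rw [hset]
  exact isClosed_iInter fun x => isClosed_iInter fun _ =>
    W.closed_of_finiteDimensional.preimage (hcont x)

theorem IsMinimalIdeal.map_le_of_preconnected [PreconnectedSpace G]
    (hcomm : ∀ x y : A, mul x y = mul y x)
    (hauto : ∀ (g : G) (x y : A), ρ g (mul x y) = mul (ρ g x) (ρ g y))
    (hcont : ∀ x, Continuous fun g => ρ g x) {I : Submodule 𝕜 A} (hI : IsMinimalIdeal mul I)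
    (hII : ∃ x ∈ I, ∃ y ∈ I, mul x y ≠ 0) (g : G) : I.map (ρ g : A →ₗ[𝕜] A) ≤ I := by
  have hopen : IsOpen {g | I.map (ρ g : A →ₗ[𝕜] A) ≤ I} := by
    have hset : {g | I.map (ρ g : A →ₗ[𝕜] A) ≤ I}
        = ⋃ x ∈ I, ⋃ y ∈ I, (fun g => mul x (ρ g y)) ⁻¹' {0}ᶜ := by
      ext g
      simp [hI.map_le_iff_exists_mul_ne_zero hcomm hII (hauto g)]
    rw [hset]
    exact isOpen_biUnion fun x _ => isOpen_biUnion fun y _ =>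
      isOpen_compl_singleton.preimage
        ((LinearMap.continuous_of_finiteDimensional (mul x)).comp (hcont y))
  have hone : (1 : G) ∈ {g | I.map (ρ g : A →ₗ[𝕜] A) ≤ I} := by simp
  exact (IsClopen.eq_univ ⟨isClosed_setOf_map_le ρ hcont I, hopen⟩ ⟨1, hone⟩).ge trivial

end Connected

theorem simple_of_irreducible_lie_group_action_general
    (G : Type*) [Group G] [TopologicalSpace G] [ConnectedSpace G]
    {A : Type*} [NormedAddCommGroup A] [NormedSpace ℝ A] [FiniteDimensional ℝ A]
    (mul : A →ₗ[ℝ] A →ₗ[ℝ] A)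
    (hcomm : ∀ x y : A, mul x y = mul y x)
    (hnontriv : ∃ x y : A, mul x y ≠ 0)
    (ρ : G →* (A ≃ₗ[ℝ] A))
    (hcont : Continuous fun p : G × A => ρ p.1 p.2)
    (hauto : ∀ (g : G) (x y : A), ρ g (mul x y) = mul (ρ g x) (ρ g y))
    (hirr : ∀ W : Submodule ℝ A, (∀ g : G, ∀ x ∈ W, ρ g x ∈ W) → W = ⊥ ∨ W = ⊤) :
    ∀ J : Submodule ℝ A, (∀ x : A, ∀ y ∈ J, mul x y ∈ J) → J = ⊥ ∨ J = ⊤ := by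
  intro J hJ
  refine or_iff_not_imp_left.mpr fun hJ0 => ?_
  have hmul : mul ≠ 0 := by
    obtain ⟨x, y, hxy⟩ := hnontriv
    exact fun h => hxy (by simp [h])
  have hcont_orbit : ∀ x, Continuous fun g => ρ g x := fun x =>
    hcont.comp (continuous_id.prodMk continuous_const)
  obtain ⟨I, hIJ, hI⟩ := exists_isMinimalIdeal_le hJ hJ0
  have hII := hI.exists_mul_ne_zero ρ hcomm hmul hauto hirr
  have hinv : ∀ g, I.map (ρ g : A →ₗ[ℝ] A) ≤ I :=
    hI.map_le_of_preconnected ρ hcomm hauto hcont_orbit hII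
  have hItop : I = ⊤ :=
    (hirr I fun g x hx => hinv g (Submodule.mem_map_of_mem hx)).resolve_left hI.prop.2
  exact top_le_iff.mp (hItop ▸ hIJ)

/-- Let G be a connected Lie group whose Lie algebra (of left-invariant
derivations) is simple, acting continuously and irreducibly by algebra
automorphisms on a finite-dimensional nonzero commutative real algebra (A, ·)
with nontrivial multiplication.  Then A is simple: its only ideals are {0} and A. -/
theorem simple_of_irreducible_lie_group_action
    {E : Type*} [NormedAddCommGroup E] [NormedSpace ℝ E]
    {H : Type*} [TopologicalSpace H] (I : ModelWithCorners ℝ E H)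
    (G : Type*) [Group G] [TopologicalSpace G] [ChartedSpace H G]
    [LieGroup I (⊤ : ℕ∞) G] [ConnectedSpace G]
    (hsimple : LieAlgebra.IsSimple ℝ (LeftInvariantDerivation I G))
    {A : Type*} [NormedAddCommGroup A] [NormedSpace ℝ A] [FiniteDimensional ℝ A]
    (hA : Nontrivial A)
    (mul : A →ₗ[ℝ] A →ₗ[ℝ] A)
    (hcomm : ∀ x y : A, mul x y = mul y x)
    (hnontriv : ∃ x y : A, mul x y ≠ 0)
    (ρ : G →* (A ≃ₗ[ℝ] A))
    (hcont : Continuous fun p : G × A => ρ p.1 p.2)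
    (hauto : ∀ (g : G) (x y : A), ρ g (mul x y) = mul (ρ g x) (ρ g y))
    (hirr : ∀ W : Submodule ℝ A, (∀ g : G, ∀ x ∈ W, ρ g x ∈ W) → W = ⊥ ∨ W = ⊤) :
    ∀ J : Submodule ℝ A, (∀ x : A, ∀ y ∈ J, mul x y ∈ J) → J = ⊥ ∨ J = ⊤ :=
  simple_of_irreducible_lie_group_action_general G mul hcomm hnontriv ρ hcont hauto hirr
end
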